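/- arXiv:1811.00817 — 8 statements merged into one kernel-verified Lean document; each statement's English description precedes it below -/
import Mathlib

section
/- Let 𝓔 be the set of functions f : {0,1}^n → ℂ (for some n ≥ 1) for which there exists a ∈ {0,1}^n such that f(x) = 0 for all x ∉ {a, ā}, where ā is the bitwise complement of a. If f ∈ 𝓔 has arity k ≥ 2, then the function h(x₁,…,x_{k−2}) := Σ_{y∈{0,1}} f(x₁,…,x_{k−2},y,y) is either a nullary constant (if k = 2) or again an element of 𝓔. -/
/-- `f` is a generalised equality function: it vanishes outside `{a, ā}` for some
bit string `a`. -/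
def InE {n : ℕ} (f : (Fin n → Bool) → ℂ) : Prop :=
  ∃ a : Fin n → Bool, ∀ x, x ≠ a → x ≠ (fun i => !(a i)) → f x = 0

/-- Contracting the last two arguments of a generalised equality function of arity
`k = m + 2 ≥ 2` yields either a nullary constant (when `k = 2`, i.e. `m = 0`)
or again a generalised equality function. -/
theorem InE_contract_self (m : ℕ) (f : (Fin (m + 2) → Bool) → ℂ) (hf : InE f) :
    m = 0 ∨
      InE (fun x : Fin m → Bool => ∑ y : Bool, f (Fin.snoc (Fin.snoc x y) y)) := by
  obtain ⟨a, ha⟩ := hf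
  right
  refine ⟨fun i => a i.castSucc.castSucc, fun x hx hx' => ?_⟩
  apply Finset.sum_eq_zero
  intro y _
  apply ha
  · intro h
    apply hx; funext i
    have := congrFun h i.castSucc.castSucc
    simpa [Fin.snoc_castSucc] using this
  · intro h
    apply hx'; funext i
    have := congrFun h i.castSucc.castSucc
    simpa [Fin.snoc_castSucc] using this
end

section
/- Let 𝓔 be the set of generalised equality functions (functions f : {0,1}^n → ℂ such that f(x) = 0 for all x outside {a, ā} for some bit string a). If f ∈ 𝓔 has arity k and g ∈ 𝓔 has arity ℓ, then h(x₁,…,x_{k+ℓ−2}) := Σ_{y∈{0,1}} f(x₁,…,x_{k−1},y)·g(x_k,…,x_{k+ℓ−2},y) is either a constant (when k = ℓ = 1) or again in 𝓔. -/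
/-- If `f ∈ 𝓔` has arity `k = m+1` and `g ∈ 𝓔` has arity `ℓ = n+1`, then
`h(x₁,…,x_{k+ℓ−2}) = Σ_y f(x₁,…,x_{k−1},y)·g(x_k,…,x_{k+ℓ−2},y)` is a constant
(when `k = ℓ = 1`) or again in `𝓔`. -/
theorem InE_contract (m n : ℕ) (f : (Fin (m + 1) → Bool) → ℂ)
    (g : (Fin (n + 1) → Bool) → ℂ) (hf : InE f) (hg : InE g) :
    (m = 0 ∧ n = 0) ∨
      InE (fun x : Fin (m + n) → Bool => ∑ y : Bool,
        f (Fin.snoc (fun i => x (Fin.castAdd n i)) y) *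
        g (Fin.snoc (fun j => x (Fin.natAdd m j)) y)) := by
  obtain ⟨a, ha⟩ := hf
  obtain ⟨b, hb⟩ := hg
  right
  refine ⟨Fin.append (fun i => a i.castSucc == a (Fin.last m))
      (fun j => b j.castSucc == b (Fin.last n)), ?_⟩
  intro x hx1 hx2
  apply Finset.sum_eq_zero
  intro y _
  by_contra hne
  obtain ⟨hfne, hgne⟩ := mul_ne_zero_iff.mp hne
  have hu : (Fin.snoc (fun i => x (Fin.castAdd n i)) y : Fin (m+1) → Bool) = a ∨
      (Fin.snoc (fun i => x (Fin.castAdd n i)) y : Fin (m+1) → Bool) = fun i => !(a i) := by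
    by_contra h
    push_neg at h
    exact hfne (ha _ h.1 h.2)
  have hv : (Fin.snoc (fun j => x (Fin.natAdd m j)) y : Fin (n+1) → Bool) = b ∨
      (Fin.snoc (fun j => x (Fin.natAdd m j)) y : Fin (n+1) → Bool) = fun j => !(b j) := by
    by_contra h
    push_neg at h
    exact hgne (hb _ h.1 h.2)
  have hxa : ∀ i : Fin m, x (Fin.castAdd n i) = ((a i.castSucc == a (Fin.last m)) == y) := by
    intro i
    rcases hu with hu | hu
    · have h1 := congrFun hu i.castSucc
      have h2 := congrFun hu (Fin.last m)
      simp only [Fin.snoc_castSucc, Fin.snoc_last] at h1 h2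
      rw [h1, ← h2]
      cases a i.castSucc <;> cases y <;> rfl
    · have h1 := congrFun hu i.castSucc
      have h2 := congrFun hu (Fin.last m)
      simp only [Fin.snoc_castSucc, Fin.snoc_last] at h1 h2
      rw [h1, h2]
      cases a i.castSucc <;> cases a (Fin.last m) <;> rfl
  have hxb : ∀ j : Fin n, x (Fin.natAdd m j) = ((b j.castSucc == b (Fin.last n)) == y) := by
    intro j
    rcases hv with hv | hv
    · have h1 := congrFun hv j.castSucc
      have h2 := congrFun hv (Fin.last n)
      simp only [Fin.snoc_castSucc, Fin.snoc_last] at h1 h2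
      rw [h1, ← h2]
      cases b j.castSucc <;> cases y <;> rfl
    · have h1 := congrFun hv j.castSucc
      have h2 := congrFun hv (Fin.last n)
      simp only [Fin.snoc_castSucc, Fin.snoc_last] at h1 h2
      rw [h1, h2]
      cases b j.castSucc <;> cases b (Fin.last n) <;> rfl
  cases y
  · apply hx2
    funext i
    induction i using Fin.addCases with
    | left i => simp [Fin.append_left, hxa i]
    | right j => simp [Fin.append_right, hxb j]
  · apply hx1
    funext i
    induction i using Fin.addCases with
    | left i => simp [Fin.append_left, hxa i]
    | right j => simp [Fin.append_right, hxb j]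
end

section
/- Let 𝓜 be the set of functions f : {0,1}^n → ℂ such that f(x) = 0 whenever the Hamming weight |x| exceeds 1. If f ∈ 𝓜 has arity k ≥ 2, then h'(x₁,…,x_{k−2}) := Σ_{y₁,y₂∈{0,1}} f(x₁,…,x_{k−2},y₁,y₂)·NEQ(y₁,y₂) is either a constant (if k = 2) or again in 𝓜, where NEQ(y₁,y₂) = 1 if y₁ ≠ y₂ and 0 otherwise. -/
/-- `f` is a generalised matching function: it vanishes on inputs of
Hamming weight greater than 1. -/
def InM {n : ℕ} (f : (Fin n → Bool) → ℂ) : Prop :=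
  ∀ x : Fin n → Bool, 1 < (Finset.univ.filter (fun i => x i = true)).card → f x = 0

/-- The binary disequality function. -/
def NEQ (y₁ y₂ : Bool) : ℂ := if y₁ = y₂ then 0 else 1

/-! Pinning the last input of a function in `𝓜` keeps it in `𝓜`, because appending a bit never
lowers the Hamming weight. The contraction is a sum of such pinnings, so it vanishes wherever
they all do. -/

open Finset

theorem card_filter_le_card_filter_snoc {n : ℕ} (x : Fin n → Bool) (b : Bool) :
    #{i | x i = true} ≤ #{i | (Fin.snoc x b : Fin (n + 1) → Bool) i = true} :=
  card_le_card_of_injOn Fin.castSucc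
    (fun i hi => by simpa [Fin.snoc_castSucc] using hi)
    ((Fin.castSucc_injective n).injOn)

theorem InM.comp_snoc {n : ℕ} {f : (Fin (n + 1) → Bool) → ℂ} (hf : InM f) (b : Bool) :
    InM (fun x : Fin n → Bool => f (Fin.snoc x b)) := fun x hx =>
  hf _ (hx.trans_le (card_filter_le_card_filter_snoc x b))

/-- NEQ-contracting the last two arguments of a generalised matching function of arity
`k = m+2 ≥ 2` yields a constant (when `k = 2`) or again a generalised matching
function. -/
theorem InM_contract_self (m : ℕ) (f : (Fin (m + 2) → Bool) → ℂ) (hf : InM f) :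
    m = 0 ∨
      InM (fun x : Fin m → Bool => ∑ y₁ : Bool, ∑ y₂ : Bool,
        f (Fin.snoc (Fin.snoc x y₁) y₂) * NEQ y₁ y₂) := by
  refine Or.inr fun x hx => sum_eq_zero fun y₁ _ => sum_eq_zero fun y₂ _ => ?_
  have hpinned : f (Fin.snoc (Fin.snoc x y₁) y₂) = 0 := (hf.comp_snoc y₂).comp_snoc y₁ x hx
  rw [hpinned, zero_mul]
end

section
/- Let 𝓜 be the set of generalised matching functions (f(x) = 0 unless the Hamming weight of x is at most 1). For f ∈ 𝓜 of arity k and g ∈ 𝓜 of arity ℓ, the function h(x₁,…,x_{k+ℓ−2}) := Σ_{y₁,y₂∈{0,1}} f(y₁,x₁,…,x_{k−1})·g(x_k,…,x_{k+ℓ−2},y₂)·NEQ(y₁,y₂) is either a constant (when k = ℓ = 1) or again in 𝓜. -/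
open Finset

def hammingWeight {k : ℕ} (x : Fin k → Bool) : ℕ := #{i | x i = true}

variable {k m n : ℕ}

theorem hammingWeight_eq_sum (x : Fin k → Bool) : hammingWeight x = ∑ i, (x i).toNat := by
  rw [hammingWeight, card_filter]
  exact sum_congr rfl fun i _ => by cases x i <;> rfl

theorem hammingWeight_cons (b : Bool) (x : Fin k → Bool) :
    hammingWeight (Fin.cons b x : Fin (k + 1) → Bool) = b.toNat + hammingWeight x := by
  simp only [hammingWeight_eq_sum, Fin.sum_univ_succ, Fin.cons_zero, Fin.cons_succ]

theorem hammingWeight_snoc (x : Fin k → Bool) (b : Bool) :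
    hammingWeight (Fin.snoc x b : Fin (k + 1) → Bool) = hammingWeight x + b.toNat := by
  simp only [hammingWeight_eq_sum, Fin.sum_univ_castSucc, Fin.snoc_castSucc, Fin.snoc_last]

theorem hammingWeight_append (x : Fin (m + n) → Bool) :
    hammingWeight x =
      hammingWeight (fun i => x (Fin.castAdd n i)) + hammingWeight (fun j => x (Fin.natAdd m j)) := by
  simp only [hammingWeight_eq_sum, Fin.sum_univ_add]

theorem InM.mul_eq_zero {k l : ℕ} {f : (Fin k → Bool) → ℂ} {g : (Fin l → Bool) → ℂ}
    (hf : InM f) (hg : InM g) {x : Fin k → Bool} {y : Fin l → Bool}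
    (hxy : 2 < hammingWeight x + hammingWeight y) : f x * g y = 0 := by
  by_cases hx : 1 < hammingWeight x
  · rw [hf x hx, zero_mul]
  · rw [hg y (show 1 < hammingWeight y by omega), mul_zero]

/-- For `f ∈ 𝓜` of arity `k = m+1` and `g ∈ 𝓜` of arity `ℓ = n+1`, the function
`h(x₁,…,x_{k+ℓ−2}) = Σ_{y₁,y₂} f(y₁,x₁,…,x_{k−1})·g(x_k,…,x_{k+ℓ−2},y₂)·NEQ(y₁,y₂)`
is a constant (when `k = ℓ = 1`) or again in `𝓜`. -/
theorem InM_contract (m n : ℕ) (f : (Fin (m + 1) → Bool) → ℂ)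
    (g : (Fin (n + 1) → Bool) → ℂ) (hf : InM f) (hg : InM g) :
    (m = 0 ∧ n = 0) ∨
      InM (fun x : Fin (m + n) → Bool => ∑ y₁ : Bool, ∑ y₂ : Bool,
        f (Fin.cons y₁ (fun i => x (Fin.castAdd n i))) *
        g (Fin.snoc (fun j => x (Fin.natAdd m j)) y₂) * NEQ y₁ y₂) := by
  refine Or.inr fun x hx => sum_eq_zero fun y₁ _ => sum_eq_zero fun y₂ _ => ?_
  by_cases hy : y₁ = y₂
  · rw [NEQ, if_pos hy, mul_zero]
  · have hbits : y₁.toNat + y₂.toNat = 1 := by cases y₁ <;> cases y₂ <;> simp_all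
    refine mul_eq_zero_of_left (hf.mul_eq_zero hg ?_) _
    rw [hammingWeight_cons, hammingWeight_snoc]
    have hsplit := hammingWeight_append x
    change 1 < hammingWeight x at hx
    omega
end

section
/- Any function in the holant clone generated by {EQ₂} has even arity; in particular EQ₃ is not in the holant clone generated by {EQ₂}, so the holant clone generated by {EQ₂} is a strict subset of the functional clone generated by {EQ₂}. -/
/-- A Boolean-input complex-valued function together with its arity. -/
abbrev Fn : Type := Σ n : ℕ, (Fin n → Bool) → ℂ

/-- The holant clone generated by `F`: the closure of `F` under tensor product,
permutation of arguments, and contraction of the last two arguments. -/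
inductive HClone (F : Set Fn) : Fn → Prop
  | base {f : Fn} : f ∈ F → HClone F f
  | tensor {k l : ℕ} {f : (Fin k → Bool) → ℂ} {g : (Fin l → Bool) → ℂ} :
      HClone F ⟨k, f⟩ → HClone F ⟨l, g⟩ →
      HClone F ⟨k + l, fun x => f (fun i => x (Fin.castAdd l i)) *
        g (fun j => x (Fin.natAdd k j))⟩
  | perm {k : ℕ} {f : (Fin k → Bool) → ℂ} (π : Equiv.Perm (Fin k)) :
      HClone F ⟨k, f⟩ → HClone F ⟨k, fun x => f (fun i => x (π i))⟩
  | contract {k : ℕ} {f : (Fin (k + 2) → Bool) → ℂ} :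
      HClone F ⟨k + 2, f⟩ →
      HClone F ⟨k, fun x => ∑ y : Bool, f (Fin.snoc (Fin.snoc x y) y)⟩

/-- The functional clone generated by `F`: the closure of `F ∪ {EQ₂}` under
introduction of fictitious arguments, pointwise product, permutation of arguments,
and summation over one argument. -/
inductive FClone (F : Set Fn) : Fn → Prop
  | base {f : Fn} : f ∈ F → FClone F f
  | eq2 : FClone F ⟨2, fun x => if x 0 = x 1 then 1 else 0⟩
  | fict {k : ℕ} {f : (Fin k → Bool) → ℂ} :
      FClone F ⟨k, f⟩ → FClone F ⟨k + 1, fun x => f (fun i => x i.castSucc)⟩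
  | prod {k : ℕ} {f g : (Fin k → Bool) → ℂ} :
      FClone F ⟨k, f⟩ → FClone F ⟨k, g⟩ → FClone F ⟨k, fun x => f x * g x⟩
  | perm {k : ℕ} {f : (Fin k → Bool) → ℂ} (π : Equiv.Perm (Fin k)) :
      FClone F ⟨k, f⟩ → FClone F ⟨k, fun x => f (fun i => x (π i))⟩
  | summ {k : ℕ} {f : (Fin (k + 1) → Bool) → ℂ} :
      FClone F ⟨k + 1, f⟩ → FClone F ⟨k, fun x => ∑ y : Bool, f (Fin.snoc x y)⟩

/-- The binary equality function, as an element of `Fn`. -/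
def EQ2el : Fn := ⟨2, fun x => if x 0 = x 1 then 1 else 0⟩

/-- The ternary equality function, as an element of `Fn`. -/
def EQ3el : Fn := ⟨3, fun x => if x 0 = x 1 ∧ x 1 = x 2 then 1 else 0⟩


lemma fclone_congr {F : Set Fn} {k : ℕ} {f g : (Fin k → Bool) → ℂ}
    (h : f = g) (hf : FClone F ⟨k, f⟩) : FClone F ⟨k, g⟩ := h ▸ hf

lemma fclone_cast {F : Set Fn} {n m : ℕ} {f : (Fin n → Bool) → ℂ}
    (h : n = m) (hf : FClone F ⟨n, f⟩) :
    FClone F ⟨m, fun x => f (fun i => x (Fin.cast h i))⟩ := by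
  subst h
  exact fclone_congr (by funext x; rfl) hf

lemma fclone_liftFirst {F : Set Fn} {k : ℕ} {f : (Fin k → Bool) → ℂ}
    (hf : FClone F ⟨k, f⟩) (l : ℕ) :
    FClone F ⟨k + l, fun x => f (fun i => x (Fin.castAdd l i))⟩ := by
  induction l with
  | zero => exact fclone_congr (by funext x; rfl) hf
  | succ l ih => exact fclone_congr (by funext x; rfl) (FClone.fict ih)

lemma fclone_liftLast {F : Set Fn} {l : ℕ} {g : (Fin l → Bool) → ℂ}
    (hg : FClone F ⟨l, g⟩) (k : ℕ) :
    FClone F ⟨k + l, fun x => g (fun j => x (Fin.natAdd k j))⟩ := by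
  have h2 := fclone_cast (Nat.add_comm l k) (fclone_liftFirst hg k)
  have h3 := FClone.perm (F := F) ((finCongr (Nat.add_comm k l)).trans finAddFlip) h2
  refine fclone_congr ?_ h3
  funext x; congr 1; funext j
  simp

lemma hclone_le {F : Set Fn} {p : Fn} (hp : HClone F p) : FClone F p := by
  induction hp with
  | base h => exact FClone.base h
  | @tensor k l f g hf hg ihf ihg =>
      exact FClone.prod (fclone_liftFirst ihf l) (fclone_liftLast ihg k)
  | perm π h ih => exact FClone.perm π ih
  | @contract k f h ih =>
      have hE := fclone_liftLast (F := F) FClone.eq2 k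
      have hp := FClone.prod ih hE
      have hs := FClone.summ (FClone.summ hp)
      refine fclone_congr ?_ hs
      funext x
      have h1 : ∀ y z : Bool,
          (Fin.snoc (Fin.snoc x y) z : Fin (k + 2) → Bool) (Fin.natAdd k (0 : Fin 2)) = y := by
        intro y z
        have : (Fin.natAdd k (0 : Fin 2)) = Fin.castSucc (Fin.last k) := rfl
        rw [this, Fin.snoc_castSucc, Fin.snoc_last]
      have h2 : ∀ y z : Bool,
          (Fin.snoc (Fin.snoc x y) z : Fin (k + 2) → Bool) (Fin.natAdd k (1 : Fin 2)) = z := by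
        intro y z
        have : (Fin.natAdd k (1 : Fin 2)) = Fin.last (k + 1) := rfl
        rw [this, Fin.snoc_last]
      simp only [Fintype.sum_bool, h1, h2]
      norm_num

lemma fclone_EQ3 : FClone {EQ2el} EQ3el := by
  have h0 : FClone {EQ2el} ⟨2, fun x => if x 0 = x 1 then 1 else 0⟩ := FClone.eq2
  have h1 := FClone.fict h0
  have h01 : FClone {EQ2el} ⟨3, fun x : Fin 3 → Bool => if x 0 = x 1 then (1:ℂ) else 0⟩ := by
    refine fclone_congr ?_ h1
    funext x; rfl
  have h12 : FClone {EQ2el} ⟨3, fun x : Fin 3 → Bool => if x 1 = x 2 then (1:ℂ) else 0⟩ := by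
    have := FClone.perm (F := {EQ2el}) (finRotate 3) h01
    refine fclone_congr ?_ this
    funext x
    have e0 : finRotate 3 (0 : Fin 3) = 1 := by decide
    have e1 : finRotate 3 (1 : Fin 3) = 2 := by decide
    simp only [e0, e1]
  have := FClone.prod h01 h12
  refine fclone_congr ?_ this
  funext x
  show _ = (if x 0 = x 1 ∧ x 1 = x 2 then (1:ℂ) else 0)
  by_cases ha : x 0 = x 1 <;> by_cases hb : x 1 = x 2 <;> simp [ha, hb]

/-- Every function in the holant clone generated by `{EQ₂}` has even arity; in
particular `EQ₃` is not in this holant clone, so the holant clone generated by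
`{EQ₂}` is a strict subset of the functional clone generated by `{EQ₂}`. -/
theorem holant_clone_EQ2_even_arity :
    (∀ p : Fn, HClone {EQ2el} p → Even p.1) ∧
    ¬ HClone {EQ2el} EQ3el ∧
    {p : Fn | HClone {EQ2el} p} ⊂ {p : Fn | FClone {EQ2el} p} := by
  have heven : ∀ p : Fn, HClone {EQ2el} p → Even p.1 := by
    intro p hp
    induction hp with
    | base h =>
        rw [Set.mem_singleton_iff] at h
        subst h
        exact ⟨1, rfl⟩
    | tensor hf hg ihf ihg => exact Even.add ihf ihg
    | perm π h ih => exact ih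
    | contract h ih =>
        simpa [Nat.even_add_one, Nat.not_even_iff_odd, Nat.odd_add_one] using ih
  have hnot : ¬ HClone {EQ2el} EQ3el := fun h =>
    (by decide : ¬ Even 3) (heven _ h)
  refine ⟨heven, hnot, fun p hp => hclone_le hp, fun hsub => ?_⟩
  exact hnot (hsub fclone_EQ3)
end

section
/- Let O be a 2×2 orthogonal complex matrix. Then the holant clone of the holographically transformed set equals the holographic transform of the holant clone: ⟨O∘F⟩_H = O∘⟨F⟩_H, for any set F of Boolean-input complex-valued functions. -/
/-- Holographic transformation of a function (with its arity) by a 2×2 matrix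
(rows/columns indexed by `Bool`, with `false = 0`, `true = 1`):
`(O∘f)(x) = Σ_z f(z) ∏_j O_{x_j z_j}`. -/
noncomputable def htransFn (O : Bool → Bool → ℂ) (p : Fn) : Fn :=
  ⟨p.1, fun x => ∑ z : Fin p.1 → Bool, p.2 z * ∏ j, O (x j) (z j)⟩

/-! Holographic transformation commutes with each clone operation: with tensor products and
permutations for any `O`, and with contraction because `∑ y, O y a * O y b = δ a b` lets the two
transformed contracted arguments collapse back to one. Hence `O∘⟨F⟩ ⊆ ⟨O∘F⟩`. The same holds for
`Oᵀ`, which is also orthogonal, and `Oᵀ∘O∘p = p`, which gives the reverse inclusion. -/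

open Finset

theorem sum_fun_fin_succ {M α : Type*} [AddCommMonoid M] [Fintype α] {n : ℕ}
    (g : (Fin (n + 1) → α) → M) : ∑ z, g z = ∑ w : Fin n → α, ∑ a, g (Fin.snoc w a) := by
  rw [← (Fin.snocEquiv fun _ => α).sum_comp, Fintype.sum_prod_type, sum_comm]
  rfl

theorem rows_orthonormal_of_cols_orthonormal {ι R : Type*} [Fintype ι] [DecidableEq ι] [CommRing R]
    {O : ι → ι → R} (hO : ∀ a b, ∑ y, O y a * O y b = if a = b then 1 else 0) (a b : ι) :
    ∑ y, O a y * O b y = if a = b then 1 else 0 := by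
  have hcols : (Matrix.of O).transpose * Matrix.of O = 1 := by
    ext a b
    simpa [Matrix.mul_apply, Matrix.one_apply] using hO a b
  simpa [Matrix.mul_apply, Matrix.one_apply] using
    congrArg (fun M : Matrix ι ι R => M a b) (mul_eq_one_comm.mp hcols)

section Transform

variable (O : Bool → Bool → ℂ)

theorem htransFn_tensor {k l : ℕ} (f : (Fin k → Bool) → ℂ) (g : (Fin l → Bool) → ℂ) :
    htransFn O ⟨k + l, fun x => f (fun i => x (Fin.castAdd l i)) * g (fun j => x (Fin.natAdd k j))⟩
      = ⟨k + l, fun x => (htransFn O ⟨k, f⟩).2 (fun i => x (Fin.castAdd l i)) *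
          (htransFn O ⟨l, g⟩).2 (fun j => x (Fin.natAdd k j))⟩ := by
  simp only [htransFn, Sigma.mk.injEq, heq_eq_eq, true_and]
  funext x
  rw [sum_mul_sum, ← Fintype.sum_prod_type', ← (Fin.appendEquiv k l).sum_comp]
  refine Fintype.sum_congr _ _ fun wz => ?_
  simp only [Fin.appendEquiv_apply, Fin.prod_univ_add, Fin.append_left, Fin.append_right]
  ring

theorem htransFn_perm {k : ℕ} (f : (Fin k → Bool) → ℂ) (π : Equiv.Perm (Fin k)) :
    htransFn O ⟨k, fun x => f (fun i => x (π i))⟩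
      = ⟨k, fun x => (htransFn O ⟨k, f⟩).2 (fun i => x (π i))⟩ := by
  simp only [htransFn, Sigma.mk.injEq, heq_eq_eq, true_and]
  funext x
  rw [← (π.arrowCongr (Equiv.refl Bool)).sum_comp]
  refine Fintype.sum_congr _ _ fun z => ?_
  simp only [Equiv.arrowCongr_apply, Equiv.refl_apply, Function.comp_def, Equiv.symm_apply_apply]
  rw [← Equiv.prod_comp π]
  simp

theorem htransFn_contract (hO : ∀ a b, ∑ y, O y a * O y b = if a = b then 1 else 0) {k : ℕ}
    (f : (Fin (k + 2) → Bool) → ℂ) :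
    htransFn O ⟨k, fun x => ∑ y, f (Fin.snoc (Fin.snoc x y) y)⟩
      = ⟨k, fun x => ∑ y, (htransFn O ⟨k + 2, f⟩).2 (Fin.snoc (Fin.snoc x y) y)⟩ := by
  simp only [htransFn, Sigma.mk.injEq, heq_eq_eq, true_and]
  funext x
  symm
  calc ∑ y, ∑ z : Fin (k + 2) → Bool, f z * ∏ j, O (Fin.snoc (Fin.snoc x y) y j) (z j)
      = ∑ y, ∑ w : Fin k → Bool, ∑ a, ∑ b, f (Fin.snoc (Fin.snoc w a) b) *
          ((∏ i, O (x i) (w i)) * (O y a * O y b)) := by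
        simp only [sum_fun_fin_succ (n := k + 1), sum_fun_fin_succ (n := k), Fin.prod_univ_castSucc,
          Fin.snoc_castSucc, Fin.snoc_last, mul_assoc]
    _ = ∑ w : Fin k → Bool, ∑ a, ∑ b, f (Fin.snoc (Fin.snoc w a) b) *
          ((∏ i, O (x i) (w i)) * ∑ y, O y a * O y b) := by
        rw [sum_comm]; refine sum_congr rfl fun w _ => ?_
        rw [sum_comm]; refine sum_congr rfl fun a _ => ?_
        rw [sum_comm]; refine sum_congr rfl fun b _ => ?_
        simp only [mul_sum]
    _ = ∑ w, (∑ y, f (Fin.snoc (Fin.snoc w y) y)) * ∏ i, O (x i) (w i) := by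
        simp only [hO, mul_ite, mul_one, mul_zero, sum_ite_eq, mem_univ, if_true, sum_mul]

theorem HClone.map_htransFn (hO : ∀ a b, ∑ y, O y a * O y b = if a = b then 1 else 0) {F : Set Fn}
    {p : Fn} (hp : HClone F p) : HClone (htransFn O '' F) (htransFn O p) := by
  induction hp with
  | base hf => exact .base ⟨_, hf, rfl⟩
  | tensor _ _ ihf ihg => rw [htransFn_tensor]; exact .tensor ihf ihg
  | perm π _ ih => rw [htransFn_perm]; exact .perm π ih
  | contract _ ih => rw [htransFn_contract O hO]; exact .contract ih

theorem htransFn_swap_htransFn (hO : ∀ a b, ∑ y, O y a * O y b = if a = b then 1 else 0)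
    (p : Fn) : htransFn (Function.swap O) (htransFn O p) = p := by
  obtain ⟨n, f⟩ := p
  simp only [htransFn, Sigma.mk.injEq, heq_eq_eq, true_and]
  funext x
  have hdelta (w : Fin n → Bool) :
      ∑ z : Fin n → Bool, ∏ j, O (z j) (w j) * O (z j) (x j) = if w = x then 1 else 0 := by
    rw [← Fintype.prod_sum fun j y => O y (w j) * O y (x j)]
    simp only [hO, prod_boole, mem_univ, true_implies, funext_iff]
  calc ∑ z : Fin n → Bool, (∑ w, f w * ∏ j, O (z j) (w j)) * ∏ j, Function.swap O (x j) (z j)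
      = ∑ w, f w * ∑ z : Fin n → Bool, ∏ j, O (z j) (w j) * O (z j) (x j) := by
        simp only [sum_mul, mul_sum, Function.swap, mul_assoc, prod_mul_distrib]
        exact sum_comm
    _ = f x := by simp only [hdelta, mul_ite, mul_one, mul_zero, sum_ite_eq', mem_univ, if_true]

end Transform

/-- For a 2×2 orthogonal matrix `O` (i.e. `OᵀO = I`), the holant clone of the
holographically transformed set equals the holographic transform of the holant
clone: `⟨O∘F⟩_H = O∘⟨F⟩_H`. -/
theorem holant_clone_orthogonal_holographic (O : Bool → Bool → ℂ)
    (hO : ∀ a b : Bool, (∑ y : Bool, O y a * O y b) = if a = b then 1 else 0)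
    (F : Set Fn) :
    {p : Fn | HClone (htransFn O '' F) p} = htransFn O '' {p : Fn | HClone F p} := by
  have hrows := rows_orthonormal_of_cols_orthonormal hO
  ext p
  constructor
  · intro hp
    have hback := hp.map_htransFn (Function.swap O) hrows
    simp only [Set.image_image, htransFn_swap_htransFn O hO, Set.image_id'] at hback
    exact ⟨_, hback, htransFn_swap_htransFn (Function.swap O) hrows p⟩
  · rintro ⟨q, hq, rfl⟩
    exact hq.map_htransFn O hO
end

section
/- Let 𝓣 be the set of all complex-valued functions of Boolean arguments of arity 1 or 2, and let C(𝓣) denote the closure of 𝓣 under tensor product and permutation of arguments. Then the holant clone generated by 𝓣 equals C(𝓣) together with all nullary constants: ⟨𝓣⟩_H = C(𝓣) ∪ 𝓐₀. -/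
/-- The closure `C(F)` of `F` under tensor product and permutation of arguments. -/
inductive TClone (F : Set Fn) : Fn → Prop
  | base {f : Fn} : f ∈ F → TClone F f
  | tensor {k l : ℕ} {f : (Fin k → Bool) → ℂ} {g : (Fin l → Bool) → ℂ} :
      TClone F ⟨k, f⟩ → TClone F ⟨l, g⟩ →
      TClone F ⟨k + l, fun x => f (fun i => x (Fin.castAdd l i)) *
        g (fun j => x (Fin.natAdd k j))⟩
  | perm {k : ℕ} {f : (Fin k → Bool) → ℂ} (π : Equiv.Perm (Fin k)) :
      TClone F ⟨k, f⟩ → TClone F ⟨k, fun x => f (fun i => x (π i))⟩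

/-- `𝓣`: all functions of arity 1 or 2. -/
def Tset : Set Fn := {p | p.1 = 1 ∨ p.1 = 2}

namespace Hw



def ee (k : ℕ) : Fin k → Fin (k+2) := fun j => j.castSucc.castSucc
def pp (k : ℕ) : Fin (k+2) := (Fin.last k).castSucc
def qq (k : ℕ) : Fin (k+2) := Fin.last (k+1)

@[simp] lemma ee_val {k} (j : Fin k) : (ee k j : ℕ) = j := rfl
@[simp] lemma pp_val {k} : (pp k : ℕ) = k := rfl
@[simp] lemma qq_val {k} : (qq k : ℕ) = k + 1 := rfl

lemma ee_inj {k} {j j' : Fin k} (h : ee k j = ee k j') : j = j' := by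
  apply Fin.ext; have := congrArg Fin.val h; simpa using this

lemma ee_ne_pp {k} (j : Fin k) : ee k j ≠ pp k := by
  intro h; have := congrArg Fin.val h; simp at this; omega

lemma ee_ne_qq {k} (j : Fin k) : ee k j ≠ qq k := by
  intro h; have := congrArg Fin.val h; simp at this; omega

lemma pp_ne_qq {k} : pp k ≠ qq k := by
  intro h; have := congrArg Fin.val h; simp at this

lemma val_lt_of_ne {k} (i : Fin (k+2)) (h1 : i ≠ pp k) (h2 : i ≠ qq k) : (i : ℕ) < k := by
  have hv : (i : ℕ) < k + 2 := i.isLt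
  by_contra h
  rcases (by omega : (i : ℕ) = k ∨ (i : ℕ) = k+1) with hc | hc
  · exact h1 (Fin.ext (by simp [hc]))
  · exact h2 (Fin.ext (by simp [hc]))

def down {k : ℕ} (i : Fin (k+2)) (j : Fin k) : Fin k :=
  if h : (i : ℕ) < k then ⟨i, h⟩ else j

lemma ee_down {k} (i : Fin (k+2)) (j : Fin k) (h : (i : ℕ) < k) : ee k (down i j) = i := by
  apply Fin.ext; simp [down, h]

lemma down_junk {k} (i : Fin (k+2)) (j : Fin k) (h : ¬ (i : ℕ) < k) : down i j = j := by
  simp [down, h]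

lemma prod_split {k : ℕ} (F : Fin (k+2) → ℂ) :
    ∏ i, F i = (∏ j, F (ee k j)) * F (pp k) * F (qq k) := by
  rw [Fin.prod_univ_castSucc, Fin.prod_univ_castSucc]
  rfl

@[simp] lemma X_pp {k} (x : Fin k → Bool) (y : Bool) :
    (Fin.snoc (Fin.snoc x y) y : Fin (k+2) → Bool) (pp k) = y := by
  simp [pp]

@[simp] lemma X_qq {k} (x : Fin k → Bool) (y : Bool) :
    (Fin.snoc (Fin.snoc x y) y : Fin (k+2) → Bool) (qq k) = y := by
  simp [qq]

@[simp] lemma X_ee {k} (x : Fin k → Bool) (y : Bool) (j : Fin k) :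
    (Fin.snoc (Fin.snoc x y) y : Fin (k+2) → Bool) (ee k j) = x j := by
  simp [ee]



def Good (n : ℕ) (f : (Fin n → Bool) → ℂ) : Prop :=
  ∃ (c : ℂ) (m : Fin n → Fin n) (h : Fin n → Bool → Bool → ℂ),
    (∀ i, m (m i) = i) ∧ ∀ x, f x = c * ∏ i, h i (x i) (x (m i))

lemma good_one (f : (Fin 1 → Bool) → ℂ) : Good 1 f := by
  refine ⟨1, id, fun _ a _ => f (fun _ => a), fun _ => rfl, fun x => ?_⟩
  simp only [Fin.prod_univ_one, one_mul, id]
  congr 1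
  funext i
  exact congrArg x (Subsingleton.elim _ _)

lemma good_two (f : (Fin 2 → Bool) → ℂ) : Good 2 f := by
  refine ⟨1, ![1, 0], ![fun a b => f ![a, b], fun _ _ => 1], by decide, fun x => ?_⟩
  rw [Fin.prod_univ_two]
  simp only [Matrix.cons_val_zero, Matrix.cons_val_one, Matrix.head_cons, one_mul, mul_one]
  congr 1
  funext j
  fin_cases j <;> simp

lemma good_perm {k : ℕ} {f : (Fin k → Bool) → ℂ} (π : Equiv.Perm (Fin k))
    (hf : Good k f) : Good k (fun x => f (fun i => x (π i))) := by
  obtain ⟨c, m, h, hm, he⟩ := hf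
  refine ⟨c, fun j => π (m (π.symm j)), fun j => h (π.symm j), fun j => by simp [hm], fun x => ?_⟩
  show f (fun i => x (π i)) = _
  rw [he]
  congr 1
  rw [← Equiv.prod_comp π (fun j => h (π.symm j) (x j) (x (π (m (π.symm j)))))]
  simp

lemma good_tensor {k l : ℕ} {f : (Fin k → Bool) → ℂ} {g : (Fin l → Bool) → ℂ}
    (hf : Good k f) (hg : Good l g) :
    Good (k + l) (fun x => f (fun i => x (Fin.castAdd l i)) * g (fun j => x (Fin.natAdd k j))) := by
  obtain ⟨c1, m1, h1, hm1, he1⟩ := hf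
  obtain ⟨c2, m2, h2, hm2, he2⟩ := hg
  refine ⟨c1 * c2,
    fun i => Fin.addCases (fun a => Fin.castAdd l (m1 a)) (fun b => Fin.natAdd k (m2 b)) i,
    fun i => Fin.addCases (motive := fun _ => Bool → Bool → ℂ) h1 h2 i,
    fun i => ?_, fun x => ?_⟩
  · refine Fin.addCases (fun a => ?_) (fun b => ?_) i <;> simp [hm1, hm2]
  · show (f fun i => x (Fin.castAdd l i)) * g (fun j => x (Fin.natAdd k j)) = _
    rw [he1, he2, Fin.prod_univ_add]
    simp only [Fin.addCases_left, Fin.addCases_right]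
    ring

lemma good_zero (f : (Fin 0 → Bool) → ℂ) : Good 0 f := by
  refine ⟨f (fun i => i.elim0), fun i => i, fun i => i.elim0, fun i => rfl, fun x => ?_⟩
  simp
  exact congrArg f (Subsingleton.elim _ _)



section Aux
variable {k : ℕ}

lemma X_down (x : Fin k → Bool) (y : Bool) (i : Fin (k+2)) (j : Fin k) (hi : (i : ℕ) < k) :
    (Fin.snoc (Fin.snoc x y) y : Fin (k+2) → Bool) i = x (down i j) := by
  conv_lhs => rw [← ee_down i j hi]
  exact X_ee x y _

lemma good_contract_aux {f : (Fin (k+2) → Bool) → ℂ}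
    (c : ℂ) (m : Fin (k+2) → Fin (k+2)) (h : Fin (k+2) → Bool → Bool → ℂ)
    (hm : ∀ i, m (m i) = i)
    (he : ∀ x, f x = c * ∏ i, h i (x i) (x (m i)))
    (hnb : m (pp k) ≠ pp k ∨ m (qq k) = qq k) :
    Good k (fun x => ∑ y : Bool, f (Fin.snoc (Fin.snoc x y) y)) := by
  -- Case A : both pp and qq are matched within {pp, qq}
  have caseA : (m (pp k) = pp k ∨ m (pp k) = qq k) →
      (m (qq k) = pp k ∨ m (qq k) = qq k) →
      Good k (fun x => ∑ y : Bool, f (Fin.snoc (Fin.snoc x y) y)) := by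
    intro hP hQ
    have hkept : ∀ j : Fin k, (m (ee k j) : ℕ) < k := by
      intro j
      apply val_lt_of_ne
      · intro hc
        have h2 : ee k j = m (pp k) := by rw [← hc, hm]
        rcases hP with h3 | h3 <;> rw [h3] at h2
        · exact ee_ne_pp j h2
        · exact ee_ne_qq j h2
      · intro hc
        have h2 : ee k j = m (qq k) := by rw [← hc, hm]
        rcases hQ with h3 | h3 <;> rw [h3] at h2
        · exact ee_ne_pp j h2
        · exact ee_ne_qq j h2
    have hE : ∀ j, ee k (down (m (ee k j)) j) = m (ee k j) :=
      fun j => ee_down _ _ (hkept j)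
    refine ⟨c * ∑ y : Bool, h (pp k) y y * h (qq k) y y,
      fun j => down (m (ee k j)) j, fun j => h (ee k j), fun j => ?_, fun x => ?_⟩
    · apply ee_inj
      rw [hE, hE, hm]
    · have key : ∀ y : Bool, f (Fin.snoc (Fin.snoc x y) y)
          = c * ((∏ j, h (ee k j) (x j) (x (down (m (ee k j)) j))) * (h (pp k) y y * h (qq k) y y)) := by
        intro y
        rw [he, prod_split]
        have eP : (Fin.snoc (Fin.snoc x y) y : Fin (k+2) → Bool) (m (pp k)) = y := by
          rcases hP with h3 | h3 <;> rw [h3] <;> simp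
        have eQ : (Fin.snoc (Fin.snoc x y) y : Fin (k+2) → Bool) (m (qq k)) = y := by
          rcases hQ with h3 | h3 <;> rw [h3] <;> simp
        rw [eP, eQ, X_pp, X_qq]
        have hprod : (∏ j, h (ee k j) ((Fin.snoc (Fin.snoc x y) y : Fin (k+2) → Bool) (ee k j))
              ((Fin.snoc (Fin.snoc x y) y : Fin (k+2) → Bool) (m (ee k j))))
            = ∏ j, h (ee k j) (x j) (x (down (m (ee k j)) j)) :=
          Finset.prod_congr rfl (fun j _ => by rw [X_ee, X_down x y (m (ee k j)) j (hkept j)])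
        rw [hprod]
        ring
      show ∑ y : Bool, f (Fin.snoc (Fin.snoc x y) y) = _
      rw [Finset.sum_congr rfl (fun y _ => key y), Fintype.sum_bool, Fintype.sum_bool]
      ring

  have caseC : (m (pp k) : ℕ) < k → m (qq k) = qq k →
      Good k (fun x => ∑ y : Bool, f (Fin.snoc (Fin.snoc x y) y)) := by
    intro hva hQ
    set a : Fin k := ⟨(m (pp k) : ℕ), hva⟩ with ha
    have hEa : ee k a = m (pp k) := Fin.ext (by simp [ha])
    have hma : m (ee k a) = pp k := by rw [hEa, hm]
    have hkept : ∀ j : Fin k, j ≠ a → (m (ee k j) : ℕ) < k := by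
      intro j hj
      apply val_lt_of_ne
      · intro hc
        have h2 : ee k j = m (pp k) := by rw [← hc, hm]
        rw [← hEa] at h2
        exact hj (ee_inj h2)
      · intro hc
        have h2 : ee k j = m (qq k) := by rw [← hc, hm]
        rw [hQ] at h2
        exact ee_ne_qq j h2
    have hmd_a : down (m (ee k a)) a = a := by
      rw [hma]; exact down_junk _ _ (by simp)
    have hE : ∀ j, j ≠ a → ee k (down (m (ee k j)) j) = m (ee k j) :=
      fun j hj => ee_down _ _ (hkept j hj)
    have hne : ∀ j, j ≠ a → down (m (ee k j)) j ≠ a := by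
      intro j hj hc
      have h2 : m (ee k j) = ee k a := by rw [← hE j hj, hc]
      have h3 : ee k j = pp k := by rw [← hma, ← h2, hm]
      exact ee_ne_pp j h3
    refine ⟨c, fun j => down (m (ee k j)) j,
      fun j s t => if j = a then ∑ y : Bool, h (ee k a) s y * h (pp k) y s * h (qq k) y y
        else h (ee k j) s t,
      fun j => ?_, fun x => ?_⟩
    · by_cases hj : j = a
      · subst hj; simp only [hmd_a]
      · apply ee_inj
        rw [hE _ (hne j hj), hE j hj, hm]
    · have key : ∀ y : Bool, f (Fin.snoc (Fin.snoc x y) y)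
          = c * ((h (ee k a) (x a) y * h (pp k) y (x a) * h (qq k) y y) *
            ∏ j ∈ (Finset.univ.erase a), h (ee k j) (x j) (x (down (m (ee k j)) j))) := by
        intro y
        rw [he, prod_split]
        rw [← Finset.mul_prod_erase Finset.univ _ (Finset.mem_univ a)]
        rw [hma]
        rw [show (Fin.snoc (Fin.snoc x y) y : Fin (k+2) → Bool) (m (pp k)) = x a from by
          rw [← hEa]; exact X_ee x y a]
        rw [hQ, X_pp, X_qq, X_ee]
        have hprod : (∏ j ∈ Finset.univ.erase a,
              h (ee k j) ((Fin.snoc (Fin.snoc x y) y : Fin (k+2) → Bool) (ee k j))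
                ((Fin.snoc (Fin.snoc x y) y : Fin (k+2) → Bool) (m (ee k j))))
            = ∏ j ∈ Finset.univ.erase a, h (ee k j) (x j) (x (down (m (ee k j)) j)) :=
          Finset.prod_congr rfl (fun j hj => by
            rw [X_ee, X_down x y (m (ee k j)) j (hkept j (Finset.mem_erase.mp hj).1)])
        rw [hprod]
        ring
      show (∑ y : Bool, f (Fin.snoc (Fin.snoc x y) y))
          = c * ∏ j, (if j = a then ∑ y : Bool, h (ee k a) (x j) y * h (pp k) y (x j) * h (qq k) y y
              else h (ee k j) (x j) (x (down (m (ee k j)) j)))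
      rw [Finset.sum_congr rfl (fun y _ => key y), Fintype.sum_bool]
      rw [← Finset.mul_prod_erase Finset.univ _ (Finset.mem_univ a), if_pos rfl]
      have hprod2 : (∏ j ∈ Finset.univ.erase a,
            (if j = a then ∑ y : Bool, h (ee k a) (x j) y * h (pp k) y (x j) * h (qq k) y y
              else h (ee k j) (x j) (x (down (m (ee k j)) j))))
          = ∏ j ∈ Finset.univ.erase a, h (ee k j) (x j) (x (down (m (ee k j)) j)) :=
        Finset.prod_congr rfl (fun j hj => if_neg (Finset.mem_erase.mp hj).1)
      rw [hprod2, Fintype.sum_bool]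
      ring
  have caseB : (m (pp k) : ℕ) < k → (m (qq k) : ℕ) < k →
      Good k (fun x => ∑ y : Bool, f (Fin.snoc (Fin.snoc x y) y)) := by
    intro hva hvb
    set a : Fin k := ⟨(m (pp k) : ℕ), hva⟩ with ha
    set b : Fin k := ⟨(m (qq k) : ℕ), hvb⟩ with hb
    have hEa : ee k a = m (pp k) := Fin.ext (by simp [ha])
    have hEb : ee k b = m (qq k) := Fin.ext (by simp [hb])
    have hma : m (ee k a) = pp k := by rw [hEa, hm]
    have hmb : m (ee k b) = qq k := by rw [hEb, hm]
    have hab : a ≠ b := by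
      intro hc
      apply pp_ne_qq (k := k)
      rw [← hma, hc, hmb]
    have hkept : ∀ j : Fin k, j ≠ a → j ≠ b → (m (ee k j) : ℕ) < k := by
      intro j hj1 hj2
      apply val_lt_of_ne
      · intro hc
        have h2 : ee k j = m (pp k) := by rw [← hc, hm]
        rw [← hEa] at h2
        exact hj1 (ee_inj h2)
      · intro hc
        have h2 : ee k j = m (qq k) := by rw [← hc, hm]
        rw [← hEb] at h2
        exact hj2 (ee_inj h2)
    have hE : ∀ j, j ≠ a → j ≠ b → ee k (down (m (ee k j)) j) = m (ee k j) :=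
      fun j hj1 hj2 => ee_down _ _ (hkept j hj1 hj2)
    have hne1 : ∀ j (hj1 : j ≠ a) (hj2 : j ≠ b), down (m (ee k j)) j ≠ a := by
      intro j hj1 hj2 hc
      have h2 : m (ee k j) = ee k a := by rw [← hE j hj1 hj2, hc]
      have h3 : ee k j = pp k := by rw [← hma, ← h2, hm]
      exact ee_ne_pp j h3
    have hne2 : ∀ j (hj1 : j ≠ a) (hj2 : j ≠ b), down (m (ee k j)) j ≠ b := by
      intro j hj1 hj2 hc
      have h2 : m (ee k j) = ee k b := by rw [← hE j hj1 hj2, hc]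
      have h3 : ee k j = qq k := by rw [← hmb, ← h2, hm]
      exact ee_ne_qq j h3
    refine ⟨c, fun j => if j = a then b else if j = b then a else down (m (ee k j)) j,
      fun j s t => if j = a then
          ∑ y : Bool, h (ee k a) s y * h (ee k b) t y * h (pp k) y s * h (qq k) y t
        else if j = b then 1 else h (ee k j) s t,
      fun j => ?_, fun x => ?_⟩
    · by_cases hj1 : j = a
      · subst hj1
        simp [hab.symm]
      · by_cases hj2 : j = b
        · subst hj2
          simp [hab, hab.symm]
        · simp only [if_neg hj1, if_neg hj2, if_neg (hne1 j hj1 hj2), if_neg (hne2 j hj1 hj2)]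
          apply ee_inj
          rw [hE _ (hne1 j hj1 hj2) (hne2 j hj1 hj2), hE j hj1 hj2, hm]
    · have hbmem : b ∈ Finset.univ.erase a :=
        Finset.mem_erase.mpr ⟨fun hc => hab hc.symm, Finset.mem_univ b⟩
      have key : ∀ y : Bool, f (Fin.snoc (Fin.snoc x y) y)
          = c * ((h (ee k a) (x a) y * h (ee k b) (x b) y * h (pp k) y (x a) * h (qq k) y (x b)) *
            ∏ j ∈ ((Finset.univ.erase a).erase b), h (ee k j) (x j) (x (down (m (ee k j)) j))) := by
        intro y
        rw [he, prod_split]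
        rw [← Finset.mul_prod_erase Finset.univ _ (Finset.mem_univ a)]
        rw [← Finset.mul_prod_erase _ _ hbmem]
        rw [hma, hmb]
        rw [show (Fin.snoc (Fin.snoc x y) y : Fin (k+2) → Bool) (m (pp k)) = x a from by
          rw [← hEa]; exact X_ee x y a]
        rw [show (Fin.snoc (Fin.snoc x y) y : Fin (k+2) → Bool) (m (qq k)) = x b from by
          rw [← hEb]; exact X_ee x y b]
        rw [X_pp, X_qq, X_ee, X_ee]
        have hprod : (∏ j ∈ (Finset.univ.erase a).erase b,
              h (ee k j) ((Fin.snoc (Fin.snoc x y) y : Fin (k+2) → Bool) (ee k j))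
                ((Fin.snoc (Fin.snoc x y) y : Fin (k+2) → Bool) (m (ee k j))))
            = ∏ j ∈ (Finset.univ.erase a).erase b,
                h (ee k j) (x j) (x (down (m (ee k j)) j)) :=
          Finset.prod_congr rfl (fun j hj => by
            have hj2 := Finset.mem_erase.mp hj
            have hj3 := Finset.mem_erase.mp hj2.2
            rw [X_ee, X_down x y (m (ee k j)) j (hkept j hj3.1 hj2.1)])
        rw [hprod]
        ring
      show (∑ y : Bool, f (Fin.snoc (Fin.snoc x y) y))
          = c * ∏ j, (if j = a then
              ∑ y : Bool, h (ee k a) (x j) y * h (ee k b) (x (if j = a then b else if j = b then a else down (m (ee k j)) j)) y *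
                h (pp k) y (x j) * h (qq k) y (x (if j = a then b else if j = b then a else down (m (ee k j)) j))
            else if j = b then 1
            else h (ee k j) (x j) (x (if j = a then b else if j = b then a else down (m (ee k j)) j)))
      rw [Finset.sum_congr rfl (fun y _ => key y), Fintype.sum_bool]
      rw [← Finset.mul_prod_erase Finset.univ _ (Finset.mem_univ a)]
      rw [← Finset.mul_prod_erase _ _ hbmem]
      simp only [if_pos rfl, if_neg hab, if_neg (fun hc : b = a => hab hc.symm)]
      have hprod2 : (∏ j ∈ (Finset.univ.erase a).erase b,
            (if j = a then
              ∑ y : Bool, h (ee k a) (x j) y * h (ee k b) (x (if j = a then b else if j = b then a else down (m (ee k j)) j)) y *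
                h (pp k) y (x j) * h (qq k) y (x (if j = a then b else if j = b then a else down (m (ee k j)) j))
            else if j = b then 1
            else h (ee k j) (x j) (x (if j = a then b else if j = b then a else down (m (ee k j)) j))))
          = ∏ j ∈ (Finset.univ.erase a).erase b,
              h (ee k j) (x j) (x (down (m (ee k j)) j)) :=
        Finset.prod_congr rfl (fun j hj => by
          have hj2 := Finset.mem_erase.mp hj
          have hj3 := Finset.mem_erase.mp hj2.2
          rw [if_neg hj3.1, if_neg hj2.1, if_neg hj3.1, if_neg hj2.1])
      rw [hprod2, Fintype.sum_bool]
      simp only [if_true]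
      ring
  rcases lt_or_ge ((m (pp k)) : ℕ) k with hva | hge
  · rcases lt_or_ge ((m (qq k)) : ℕ) k with hvb | hge2
    · exact caseB hva hvb
    · have hQ : m (qq k) = qq k := by
        have h2 : (m (qq k) : ℕ) < k + 2 := (m (qq k)).isLt
        rcases (by omega : (m (qq k) : ℕ) = k ∨ (m (qq k) : ℕ) = k + 1) with hc | hc
        · exfalso
          have h3 : m (qq k) = pp k := Fin.ext (by simp [hc])
          have h4 : m (pp k) = qq k := by rw [← h3, hm]
          rw [h4] at hva
          simp at hva
        · exact Fin.ext (by simp [hc])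
      exact caseC hva hQ
  · have hP : m (pp k) = pp k ∨ m (pp k) = qq k := by
      have h2 := (m (pp k)).isLt
      rcases (by omega : (m (pp k) : ℕ) = k ∨ (m (pp k) : ℕ) = k + 1) with hc | hc
      · left; exact Fin.ext (by simp [hc])
      · right; exact Fin.ext (by simp [hc])
    rcases hP with hP | hP
    · have hQ : m (qq k) = qq k := hnb.resolve_left (by simp [hP])
      exact caseA (Or.inl hP) (Or.inr hQ)
    · have hQ : m (qq k) = pp k := by rw [← hP, hm]
      exact caseA (Or.inr hP) (Or.inl hQ)

end Aux


lemma good_contract {k : ℕ} {f : (Fin (k+2) → Bool) → ℂ} (hf : Good (k+2) f) :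
    Good k (fun x => ∑ y : Bool, f (Fin.snoc (Fin.snoc x y) y)) := by
  obtain ⟨c, m, h, hm, he⟩ := hf
  by_cases hb : m (pp k) = pp k ∧ m (qq k) ≠ qq k
  · -- bad case : conjugate by the swap of pp and qq
    set σ : Equiv.Perm (Fin (k+2)) := Equiv.swap (pp k) (qq k) with hσ
    have hσσ : ∀ i, σ (σ i) = i := fun i => Equiv.swap_apply_self _ _ i
    have key : Good k (fun x => ∑ y : Bool,
        (fun z : Fin (k+2) → Bool => f (fun i => z (σ i))) (Fin.snoc (Fin.snoc x y) y)) := by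
      apply good_contract_aux (f := fun z : (Fin (k+2) → Bool) => f (fun i => z (σ i))) c (fun j => σ (m (σ j))) (fun j => h (σ j))
      · intro i
        rw [hσσ, hm, hσσ]
      · intro x
        rw [he]
        congr 1
        rw [← Equiv.prod_comp σ (fun j => h (σ j) (x j) (x (σ (m (σ j)))))]
        exact Finset.prod_congr rfl (fun i _ => by simp [hσσ])
      · left
        intro hc
        have h1 : σ (pp k) = qq k := Equiv.swap_apply_left _ _
        rw [h1] at hc
        have h2 : m (qq k) ≠ pp k := by
          intro h3
          have h4 : m (pp k) = qq k := by rw [← h3, hm]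
          rw [hb.1] at h4
          exact pp_ne_qq h4
        have h5 : σ (m (qq k)) = m (qq k) :=
          Equiv.swap_apply_of_ne_of_ne h2 hb.2
        rw [h5] at hc
        exact h2 hc
    have heq : (fun x : Fin k → Bool => ∑ y : Bool,
        (fun z : Fin (k+2) → Bool => f (fun i => z (σ i))) (Fin.snoc (Fin.snoc x y) y))
        = fun x => ∑ y : Bool, f (Fin.snoc (Fin.snoc x y) y) := by
      funext x
      refine Finset.sum_congr rfl (fun y _ => ?_)
      show f (fun i => (Fin.snoc (Fin.snoc x y) y : Fin (k+2) → Bool) (σ i)) = _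
      congr 1
      funext i
      rcases eq_or_ne i (pp k) with rfl | h1
      · rw [hσ]; rw [Equiv.swap_apply_left, X_qq, X_pp]
      rcases eq_or_ne i (qq k) with rfl | h2
      · rw [hσ]; rw [Equiv.swap_apply_right, X_pp, X_qq]
      · rw [hσ]; rw [Equiv.swap_apply_of_ne_of_ne h1 h2]
    rw [← heq]
    exact key
  · apply good_contract_aux c m h hm he
    by_cases h1 : m (pp k) = pp k
    · right
      by_contra h2
      exact hb ⟨h1, h2⟩
    · left; exact h1

lemma good_of_hclone {p : Fn} (hp : HClone Tset p) : Good p.1 p.2 := by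
  induction hp with
  | base hf =>
    rename_i f
    obtain ⟨n, g⟩ := f
    rcases hf with h1 | h1 <;> simp only at h1 <;> subst h1
    · exact good_one g
    · exact good_two g
  | tensor h1 h2 ih1 ih2 => exact good_tensor ih1 ih2
  | perm π h ih => exact good_perm π ih
  | contract h ih => exact good_contract ih

lemma tclone_of_eq {F : Set Fn} {n : ℕ} {f g : (Fin n → Bool) → ℂ}
    (h : TClone F ⟨n, f⟩) (e : ∀ x, f x = g x) : TClone F ⟨n, g⟩ := by
  have : f = g := funext e
  rwa [this] at h

lemma hclone_of_eq {F : Set Fn} {n : ℕ} {f g : (Fin n → Bool) → ℂ}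
    (h : HClone F ⟨n, f⟩) (e : ∀ x, f x = g x) : HClone F ⟨n, g⟩ := by
  have : f = g := funext e
  rwa [this] at h

def dw {N : ℕ} (i : Fin (N+1)) (j : Fin N) : Fin N :=
  if h : (i : ℕ) < N then ⟨i, h⟩ else j

lemma castSucc_dw {N : ℕ} (i : Fin (N+1)) (j : Fin N) (h : (i : ℕ) < N) :
    Fin.castSucc (dw i j) = i := Fin.ext (by simp [dw, h])

lemma peel {K : ℕ} (hK : 1 ≤ K) {f : (Fin (K+2) → Bool) → ℂ} (hf : Good (K+2) f)
    (IH : ∀ M (g : (Fin M → Bool) → ℂ), M < K + 2 → Good M g → 1 ≤ M → TClone Tset ⟨M, g⟩) :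
    TClone Tset ⟨K+2, f⟩ := by
  obtain ⟨c, m, h, hm, he⟩ := hf
  by_cases hq : m (qq K) = qq K
  · -- peel off one unary coordinate
    have hkept : ∀ j : Fin (K+1), (m j.castSucc : ℕ) < K+1 := by
      intro j
      have h1 : m j.castSucc ≠ qq K := by
        intro hc
        have h2 : j.castSucc = m (qq K) := by rw [← hc, hm]
        rw [hq] at h2
        have h3 := congrArg Fin.val h2
        simp [qq] at h3
        omega
      have h2 := (m j.castSucc).isLt
      have h3 : (m j.castSucc : ℕ) ≠ K+1 := fun hc => h1 (Fin.ext (by simpa [qq] using hc))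
      omega
    set m1 : Fin (K+1) → Fin (K+1) := fun j => dw (m j.castSucc) j with hm1def
    have hcs : ∀ j, Fin.castSucc (m1 j) = m j.castSucc := fun j => castSucc_dw _ _ (hkept j)
    have hm1 : ∀ j, m1 (m1 j) = j := by
      intro j
      have h4 : Fin.castSucc (m1 (m1 j)) = Fin.castSucc j := by rw [hcs, hcs, hm]
      exact Fin.castSucc_injective _ h4
    have hg : Good (K+1) (fun x' : Fin (K+1) → Bool =>
        c * ∏ j, h j.castSucc (x' j) (x' (m1 j))) :=
      ⟨c, m1, fun j => h j.castSucc, hm1, fun _ => rfl⟩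
    have hTg := IH (K+1) _ (by omega) hg (by omega)
    have hTu : TClone Tset ⟨1, fun v : Fin 1 → Bool => h (qq K) (v 0) (v 0)⟩ :=
      TClone.base (Or.inl rfl)
    have hT := TClone.tensor hTg hTu
    refine tclone_of_eq hT ?_
    intro x
    show (c * ∏ j, h j.castSucc (x (Fin.castAdd 1 j)) (x (Fin.castAdd 1 (m1 j)))) *
        h (qq K) (x (Fin.natAdd (K+1) (0 : Fin 1))) (x (Fin.natAdd (K+1) (0 : Fin 1))) = f x
    rw [he]
    conv_rhs => rw [Fin.prod_univ_castSucc]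
    rw [show Fin.last (K+1) = qq K from rfl, hq]
    rw [show Fin.natAdd (K+1) (0 : Fin 1) = qq K from Fin.ext (by simp [qq])]
    have hpr : (∏ j, h j.castSucc (x (Fin.castAdd 1 j)) (x (Fin.castAdd 1 (m1 j))))
        = ∏ j : Fin (K+1), h j.castSucc (x j.castSucc) (x (m j.castSucc)) :=
      Finset.prod_congr rfl (fun j _ => by
        rw [show Fin.castAdd 1 j = j.castSucc from Fin.ext (by simp),
            show Fin.castAdd 1 (m1 j) = (m1 j).castSucc from Fin.ext (by simp), hcs])
    rw [hpr]
    ring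
  · -- the partner of the last coordinate : move it to position pp by a swap
    set σ : Equiv.Perm (Fin (K+2)) := Equiv.swap (m (qq K)) (pp K) with hσ
    have hσσ : ∀ i, σ (σ i) = i := fun i => Equiv.swap_apply_self _ _ i
    set m2 : Fin (K+2) → Fin (K+2) := fun j => σ (m (σ j)) with hm2def
    set h2 : Fin (K+2) → Bool → Bool → ℂ := fun j => h (σ j) with hh2def
    have hm2 : ∀ i, m2 (m2 i) = i := by
      intro i
      simp only [hm2def]
      rw [hσσ, hm, hσσ]
    have hσq : σ (qq K) = qq K :=
      Equiv.swap_apply_of_ne_of_ne (fun hc => hq hc.symm) (fun hc => pp_ne_qq hc.symm)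
    have hm2q : m2 (qq K) = pp K := by
      simp only [hm2def]
      rw [hσq]
      exact Equiv.swap_apply_left _ _
    have hm2p : m2 (pp K) = qq K := by
      simp only [hm2def]
      rw [show σ (pp K) = m (qq K) from Equiv.swap_apply_right _ _, hm, hσq]
    have he2 : ∀ x : Fin (K+2) → Bool, f (fun i => x (σ i)) = c * ∏ i, h2 i (x i) (x (m2 i)) := by
      intro x
      rw [he]
      congr 1
      rw [← Equiv.prod_comp σ (fun j => h2 j (x j) (x (m2 j)))]
      exact Finset.prod_congr rfl (fun i _ => by simp [hm2def, hh2def, hσσ])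
    have hkept : ∀ j : Fin K, (m2 (ee K j) : ℕ) < K := by
      intro j
      apply val_lt_of_ne
      · intro hc
        have h3 : ee K j = m2 (pp K) := by rw [← hc, hm2]
        rw [hm2p] at h3
        exact ee_ne_qq j h3
      · intro hc
        have h3 : ee K j = m2 (qq K) := by rw [← hc, hm2]
        rw [hm2q] at h3
        exact ee_ne_pp j h3
    have hcs2 : ∀ j, ee K (down (m2 (ee K j)) j) = m2 (ee K j) :=
      fun j => ee_down _ _ (hkept j)
    have hinv : ∀ j, (fun j' => down (m2 (ee K j')) j') ((fun j' => down (m2 (ee K j')) j') j) = j := by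
      intro j
      apply ee_inj
      show ee K (down (m2 (ee K (down (m2 (ee K j)) j))) (down (m2 (ee K j)) j)) = ee K j
      rw [hcs2, hcs2, hm2]
    have hg : Good K (fun x' : Fin K → Bool =>
        c * ∏ j, h2 (ee K j) (x' j) (x' (down (m2 (ee K j)) j))) :=
      ⟨c, fun j => down (m2 (ee K j)) j, fun j => h2 (ee K j), hinv, fun _ => rfl⟩
    have hTg := IH K _ (by omega) hg hK
    have hTB : TClone Tset ⟨2, fun v : Fin 2 → Bool =>
        h2 (pp K) (v 0) (v 1) * h2 (qq K) (v 1) (v 0)⟩ :=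
      TClone.base (Or.inr rfl)
    have hT := TClone.tensor hTg hTB
    have hT2 : TClone Tset ⟨K+2, fun x => f (fun i => x (σ i))⟩ := by
      refine tclone_of_eq hT ?_
      intro x
      show (c * ∏ j, h2 (ee K j) (x (Fin.castAdd 2 j)) (x (Fin.castAdd 2 (down (m2 (ee K j)) j)))) *
          (h2 (pp K) (x (Fin.natAdd K (0 : Fin 2))) (x (Fin.natAdd K (1 : Fin 2))) *
            h2 (qq K) (x (Fin.natAdd K (1 : Fin 2))) (x (Fin.natAdd K (0 : Fin 2)))) = f (fun i => x (σ i))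
      rw [he2, prod_split]
      rw [hm2p, hm2q]
      rw [show Fin.natAdd K (0 : Fin 2) = pp K from Fin.ext (by simp [pp]),
          show Fin.natAdd K (1 : Fin 2) = qq K from Fin.ext (by simp [qq])]
      have hpr : (∏ j, h2 (ee K j) (x (Fin.castAdd 2 j)) (x (Fin.castAdd 2 (down (m2 (ee K j)) j))))
          = ∏ j, h2 (ee K j) (x (ee K j)) (x (m2 (ee K j))) :=
        Finset.prod_congr rfl (fun j _ => by
          rw [show Fin.castAdd 2 j = ee K j from Fin.ext (by simp [ee]),
              show Fin.castAdd 2 (down (m2 (ee K j)) j) = ee K (down (m2 (ee K j)) j) from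
                Fin.ext (by simp [ee]), hcs2])
      rw [hpr]
      ring
    have hT3 := TClone.perm σ hT2
    refine tclone_of_eq hT3 ?_
    intro x
    exact congrArg f (funext fun i => show x (σ (σ i)) = x i from by rw [hσσ])

lemma tclone_of_good : ∀ (n : ℕ) (f : (Fin n → Bool) → ℂ), Good n f → 1 ≤ n → TClone Tset ⟨n, f⟩ := by
  intro n
  induction n using Nat.strong_induction_on with
  | _ n ih =>
    intro f hf hn
    rcases n with _ | n
    · omega
    rcases n with _ | n
    · exact TClone.base (Or.inl rfl)
    rcases n with _ | k
    · exact TClone.base (Or.inr rfl)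
    exact peel (by omega) hf (fun M g hM hg h1 => ih M (by omega) g hg h1)

lemma hclone_of_tclone {p : Fn} (h : TClone Tset p) : HClone Tset p := by
  induction h with
  | base hf => exact HClone.base hf
  | tensor _ _ ih1 ih2 => exact HClone.tensor ih1 ih2
  | perm π _ ih => exact HClone.perm π ih

lemma hclone_nullary (f : (Fin 0 → Bool) → ℂ) : HClone Tset ⟨0, f⟩ := by
  have hb : HClone Tset ⟨2, fun _ : Fin 2 → Bool => f (fun i : Fin 0 => i.elim0) / 2⟩ :=
    HClone.base (Or.inr rfl)
  have hc := HClone.contract hb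
  refine hclone_of_eq hc ?_
  intro x
  rw [Fintype.sum_bool]
  have h1 : f x = f (fun i : Fin 0 => i.elim0) := congrArg f (Subsingleton.elim _ _)
  rw [h1]
  ring

end Hw

/-- The holant clone generated by `𝓣` (all unary and binary functions) equals the
closure of `𝓣` under tensor product and permutation of arguments together with all
nullary constants: `⟨𝓣⟩_H = C(𝓣) ∪ 𝓐₀`. -/
theorem holant_clone_T_eq_tensor_closure :
    {p : Fn | HClone Tset p} = {p : Fn | TClone Tset p} ∪ {p : Fn | p.1 = 0} := by
  ext p
  simp only [Set.mem_setOf_eq, Set.mem_union]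
  constructor
  · intro hp
    have hg := Hw.good_of_hclone hp
    obtain ⟨n, f⟩ := p
    rcases Nat.eq_zero_or_pos n with h0 | h1
    · exact Or.inr h0
    · exact Or.inl (Hw.tclone_of_good n f hg h1)
  · rintro (hp | hp)
    · exact Hw.hclone_of_tclone hp
    · obtain ⟨n, f⟩ := p
      simp only at hp
      subst hp
      exact Hw.hclone_nullary f
end

section
/- A symmetric ternary function f = [f₀,f₁,f₂,f₃] is expressible as M∘EQ₃ for some invertible 2×2 complex matrix M if and only if (f₀f₃ − f₁f₂)² − 4(f₁² − f₀f₂)(f₂² − f₁f₃) ≠ 0. (One direction to verify: if f = M∘EQ₃ with M invertible, this polynomial in the values of f is non-zero.) -/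
/-!
If `f = M∘EQ₃` the polynomial equals `(ad - bc)⁶`. Conversely, `A = f₁² - f₀f₂`,
`B = f₀f₃ - f₁f₂`, `C = f₂² - f₁f₃` are the entries of the cross product of the rows of the
Hankel matrix `[[f₀, f₁, f₂], [f₁, f₂, f₃]]`, so `f` satisfies the recurrence
`A f_{k+2} + B f_{k+1} + C f_k = 0`, and the polynomial is the discriminant `B² - 4AC` of its
characteristic polynomial. When `A ≠ 0` the two roots `r ≠ s` give `f_k = α r^k + β s^k` with
`αβ ≠ 0`, and cube roots of `α, β` give `M`. Reversing `f` swaps `A` and `C`, and `A = C = 0`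
forces `f = [f₀, 0, 0, f₃]`.
-/

open Polynomial

variable {K : Type*}

section CommRing

variable [CommRing K]

/-- `f = M∘EQ₃` for the invertible matrix `M = !![a, b; c, d]`. -/
def IsGHZClass (f₀ f₁ f₂ f₃ : K) : Prop :=
  ∃ a b c d : K, a * d - b * c ≠ 0 ∧
    f₀ = a ^ 3 + b ^ 3 ∧ f₁ = a ^ 2 * c + b ^ 2 * d ∧
    f₂ = a * c ^ 2 + b * d ^ 2 ∧ f₃ = c ^ 3 + d ^ 3

def ghzDiscrim (f₀ f₁ f₂ f₃ : K) : K :=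
  discrim (f₁ ^ 2 - f₀ * f₂) (f₀ * f₃ - f₁ * f₂) (f₂ ^ 2 - f₁ * f₃)

theorem hankel_recurrence_zero (f₀ f₁ f₂ f₃ : K) :
    (f₁ ^ 2 - f₀ * f₂) * f₂ + (f₀ * f₃ - f₁ * f₂) * f₁ + (f₂ ^ 2 - f₁ * f₃) * f₀ = 0 := by
  ring

theorem hankel_recurrence_one (f₀ f₁ f₂ f₃ : K) :
    (f₁ ^ 2 - f₀ * f₂) * f₃ + (f₀ * f₃ - f₁ * f₂) * f₂ + (f₂ ^ 2 - f₁ * f₃) * f₁ = 0 := by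
  ring

theorem ghzDiscrim_reverse (f₀ f₁ f₂ f₃ : K) :
    ghzDiscrim f₃ f₂ f₁ f₀ = ghzDiscrim f₀ f₁ f₂ f₃ := by
  unfold ghzDiscrim discrim
  ring

theorem ghzDiscrim_cubes (a b c d : K) :
    ghzDiscrim (a ^ 3 + b ^ 3) (a ^ 2 * c + b ^ 2 * d) (a * c ^ 2 + b * d ^ 2) (c ^ 3 + d ^ 3) =
      (a * d - b * c) ^ 6 := by
  unfold ghzDiscrim discrim
  ring

theorem IsGHZClass.reverse {f₀ f₁ f₂ f₃ : K} (h : IsGHZClass f₀ f₁ f₂ f₃) :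
    IsGHZClass f₃ f₂ f₁ f₀ := by
  obtain ⟨a, b, c, d, hdet, h₀, h₁, h₂, h₃⟩ := h
  exact ⟨c, d, a, b, fun h => hdet (by linear_combination -h),
    by linear_combination h₃, by linear_combination h₂, by linear_combination h₁,
    by linear_combination h₀⟩

theorem IsGHZClass.ghzDiscrim_ne_zero [NoZeroDivisors K] {f₀ f₁ f₂ f₃ : K}
    (h : IsGHZClass f₀ f₁ f₂ f₃) : ghzDiscrim f₀ f₁ f₂ f₃ ≠ 0 := by
  obtain ⟨a, b, c, d, hdet, rfl, rfl, rfl, rfl⟩ := h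
  rw [ghzDiscrim_cubes]
  exact pow_ne_zero 6 hdet

end CommRing

section IsAlgClosed

variable [Field K] [IsAlgClosed K]

theorem exists_quadratic_eq_zero_of_isAlgClosed {a : K} (ha : a ≠ 0) (b c : K) :
    ∃ x, a * x ^ 2 + b * x + c = 0 := by
  obtain ⟨x, hx⟩ := IsAlgClosed.exists_root (C a * X ^ 2 + C b * X + C c)
    (by rw [degree_quadratic ha]; decide)
  exact ⟨x, by simpa using hx⟩

theorem isGHZClass_of_geometric {f₀ f₁ f₂ f₃ α β r s : K} (hα : α ≠ 0) (hβ : β ≠ 0)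
    (hrs : r ≠ s) (h₀ : f₀ = α + β) (h₁ : f₁ = α * r + β * s)
    (h₂ : f₂ = α * r ^ 2 + β * s ^ 2) (h₃ : f₃ = α * r ^ 3 + β * s ^ 3) :
    IsGHZClass f₀ f₁ f₂ f₃ := by
  obtain ⟨a, rfl⟩ := IsAlgClosed.exists_pow_nat_eq α three_pos
  obtain ⟨b, rfl⟩ := IsAlgClosed.exists_pow_nat_eq β three_pos
  have hdet : a * (s * b) - b * (r * a) = a * b * (s - r) := by ring
  refine ⟨a, b, r * a, s * b, ?_, ?_, ?_, ?_, ?_⟩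
  · rw [hdet]
    exact mul_ne_zero (mul_ne_zero (ne_zero_pow three_ne_zero hα)
      (ne_zero_pow three_ne_zero hβ)) (sub_ne_zero.2 hrs.symm)
  · linear_combination h₀
  · linear_combination h₁
  · linear_combination h₂
  · linear_combination h₃

theorem isGHZClass_of_recurrence {f₀ f₁ f₂ f₃ r s : K} (hA : f₁ ^ 2 - f₀ * f₂ ≠ 0)
    (hrs : r ≠ s) (h₂ : f₂ = (r + s) * f₁ - r * s * f₀)
    (h₃ : f₃ = (r + s) * f₂ - r * s * f₁) : IsGHZClass f₀ f₁ f₂ f₃ := by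
  have hrs' : r - s ≠ 0 := sub_ne_zero.2 hrs
  have hαβ : (f₁ - s * f₀) * (r * f₀ - f₁) = -(f₁ ^ 2 - f₀ * f₂) := by
    linear_combination -f₀ * h₂
  have hαβ' : (f₁ - s * f₀) * (r * f₀ - f₁) ≠ 0 := by
    rw [hαβ]
    exact neg_ne_zero.2 hA
  refine isGHZClass_of_geometric (α := (f₁ - s * f₀) / (r - s)) (β := (r * f₀ - f₁) / (r - s))
    (div_ne_zero (left_ne_zero_of_mul hαβ') hrs') (div_ne_zero (right_ne_zero_of_mul hαβ') hrs')
    hrs ?_ ?_ ?_ ?_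
  · field_simp
    ring
  · field_simp
    ring
  · rw [h₂]
    field_simp
    ring
  · rw [h₃, h₂]
    field_simp
    ring

theorem isGHZClass_of_leading_ne_zero {f₀ f₁ f₂ f₃ : K} (hD : ghzDiscrim f₀ f₁ f₂ f₃ ≠ 0)
    (hA : f₁ ^ 2 - f₀ * f₂ ≠ 0) : IsGHZClass f₀ f₁ f₂ f₃ := by
  set A := f₁ ^ 2 - f₀ * f₂
  set B := f₀ * f₃ - f₁ * f₂
  set C := f₂ ^ 2 - f₁ * f₃
  obtain ⟨r, hr⟩ := exists_quadratic_eq_zero_of_isAlgClosed hA B C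
  obtain ⟨s, hsum⟩ : ∃ s, A * (r + s) = -B := ⟨-B / A - r, by field_simp; ring⟩
  have hprod : A * (r * s) = C := by
    linear_combination r * hsum - hr
  have hD' : ghzDiscrim f₀ f₁ f₂ f₃ = A ^ 2 * (r - s) ^ 2 := by
    unfold ghzDiscrim discrim
    linear_combination (B - A * (r + s)) * hsum + 4 * A * hprod
  have hrs : r ≠ s := by
    rintro rfl
    exact hD (by rw [hD', sub_self]; ring)
  refine isGHZClass_of_recurrence hA hrs (mul_left_cancel₀ hA ?_) (mul_left_cancel₀ hA ?_)
  · linear_combination hankel_recurrence_zero f₀ f₁ f₂ f₃ - f₁ * hsum + f₀ * hprod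
  · linear_combination hankel_recurrence_one f₀ f₁ f₂ f₃ - f₂ * hsum + f₁ * hprod

theorem isGHZClass_diagonal {f₀ f₃ : K} (h₀ : f₀ ≠ 0) (h₃ : f₃ ≠ 0) :
    IsGHZClass f₀ 0 0 f₃ := by
  obtain ⟨a, rfl⟩ := IsAlgClosed.exists_pow_nat_eq f₀ three_pos
  obtain ⟨d, rfl⟩ := IsAlgClosed.exists_pow_nat_eq f₃ three_pos
  refine ⟨a, 0, 0, d, ?_, by ring, by ring, by ring, by ring⟩
  simpa using And.intro (ne_zero_pow three_ne_zero h₀) (ne_zero_pow three_ne_zero h₃)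

theorem isGHZClass_of_ghzDiscrim_ne_zero {f₀ f₁ f₂ f₃ : K}
    (hD : ghzDiscrim f₀ f₁ f₂ f₃ ≠ 0) : IsGHZClass f₀ f₁ f₂ f₃ := by
  rcases ne_or_eq (f₁ ^ 2 - f₀ * f₂) 0 with hA | hA
  · exact isGHZClass_of_leading_ne_zero hD hA
  rcases ne_or_eq (f₂ ^ 2 - f₁ * f₃) 0 with hC | hC
  · rw [← ghzDiscrim_reverse] at hD
    exact (isGHZClass_of_leading_ne_zero hD (by rwa [mul_comm f₃])).reverse
  have hB : f₀ * f₃ - f₁ * f₂ ≠ 0 := by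
    unfold ghzDiscrim discrim at hD
    rw [hA, hC] at hD
    simpa using hD
  have hf₁ : f₁ = 0 := by
    simpa [hA, hC, hB] using hankel_recurrence_zero f₀ f₁ f₂ f₃
  have hf₂ : f₂ = 0 := by
    simpa [hA, hC, hB] using hankel_recurrence_one f₀ f₁ f₂ f₃
  subst hf₁ hf₂
  simp only [mul_zero, sub_zero, ne_eq, mul_eq_zero, not_or] at hB
  exact isGHZClass_diagonal hB.1 hB.2

theorem isGHZClass_iff_ghzDiscrim_ne_zero (f₀ f₁ f₂ f₃ : K) :
    IsGHZClass f₀ f₁ f₂ f₃ ↔ ghzDiscrim f₀ f₁ f₂ f₃ ≠ 0 :=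
  ⟨IsGHZClass.ghzDiscrim_ne_zero, isGHZClass_of_ghzDiscrim_ne_zero⟩

end IsAlgClosed

/-- A symmetric ternary function `f = [f₀,f₁,f₂,f₃]` equals `M∘EQ₃` for some
invertible 2×2 matrix `M = [[a,b],[c,d]]` (i.e. `f = [a³+b³, a²c+b²d, ac²+bd²,
c³+d³]` with `ad−bc ≠ 0`) if and only if
`(f₀f₃ − f₁f₂)² − 4(f₁² − f₀f₂)(f₂² − f₁f₃) ≠ 0`. -/
theorem ghz_class_characterisation (f₀ f₁ f₂ f₃ : ℂ) :
    (∃ a b c d : ℂ, a * d - b * c ≠ 0 ∧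
        f₀ = a ^ 3 + b ^ 3 ∧ f₁ = a ^ 2 * c + b ^ 2 * d ∧
        f₂ = a * c ^ 2 + b * d ^ 2 ∧ f₃ = c ^ 3 + d ^ 3) ↔
      (f₀ * f₃ - f₁ * f₂) ^ 2 -
        4 * (f₁ ^ 2 - f₀ * f₂) * (f₂ ^ 2 - f₁ * f₃) ≠ 0 :=
  isGHZClass_iff_ghzDiscrim_ne_zero f₀ f₁ f₂ f₃
end
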